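/- Let Θ and Ξ be arbitrary types, let S ≥ 2 and K ∈ ℕ, let η : Fin S → Θ → ℝ, T : Fin S → Ξ → ℝ, let a ∈ ℝ, and let c : Fin (K+1) → ℝ (the Taylor coefficients g^{(k)}(a)/k!, not depending on θ). Set D = Nat.choose (K + S + 1) (S + 1) - (K + 1). Then for every M ∈ ℕ there exist n : Θ → Fin D → ℝ, t : (Fin M → Ξ) → Fin D → ℝ, and a constant r ∈ ℝ (independent of θ and ξ) such that for all θ and ξ, ∑_{i : Fin M} ∑_{k = 0}^{K} c k · (∑_{s : Fin S} η s θ · T s (ξ i) - a)^k = ∑_{j : Fin D} n θ j · t ξ j + r. That is, the Monte Carlo sum of the K-term Taylor approximation of g admits a factorization of size C(K+S+1, S+1) − (K+1), independent of M. (Theorem 4, first route: the shift −a treated as an extra indeterminate.) -/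

import Mathlib

/-!
Expanding `∑ₖ cₖ (w - a)ᵏ` in powers of `w` gives `∑_{j ≤ K} bⱼ wʲ` with `θ`-independent `bⱼ`.
For `w = ∑ₛ ηₛ Tₛ`, the multinomial theorem writes `wʲ` as a sum over multisets `m` of size `j`
of `countPerms m · ∏_{s ∈ m} ηₛ · ∏_{s ∈ m} Tₛ`, so each monomial of degree `1 ≤ j ≤ K` splits
into a `θ`-factor times a `ξ`-factor (summed over the samples), while `j = 0` gives the constant
`M b₀`. There are `C(S + K, K) - 1 ≤ C(K + S + 1, S + 1) - (K + 1)` such monomials; padding with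
zeros gives exactly the required size.
-/

open Finset Polynomial

lemma exists_fin_factorization_of_card_le {R Θ X ι : Type*} [NonUnitalNonAssocSemiring R]
    [Fintype ι] {D : ℕ} (h : Fintype.card ι ≤ D) (N : Θ → ι → R) (τ : X → ι → R) :
    ∃ (n : Θ → Fin D → R) (t : X → Fin D → R),
      ∀ θ x, ∑ i, N θ i * τ x i = ∑ j, n θ j * t x j := by
  obtain ⟨e⟩ : Nonempty (ι ⊕ Fin (D - Fintype.card ι) ≃ Fin D) :=
    ⟨Fintype.equivFinOfCardEq (by simp [Nat.add_sub_cancel' h])⟩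
  refine ⟨fun θ j => Sum.elim (N θ) 0 (e.symm j), fun x j => Sum.elim (τ x) 0 (e.symm j),
    fun θ x => ?_⟩
  rw [← e.sum_comp]
  simp [Fintype.sum_sum_type]

lemma sum_mul_pow_eq_sum_sym {R ι : Type*} [CommSemiring R] [Fintype ι] [DecidableEq ι]
    (x y : ι → R) (j : ℕ) :
    (∑ s, x s * y s) ^ j =
      ∑ m : Sym ι j, m.val.countPerms * (m.val.map x).prod * (m.val.map y).prod := by
  simp only [Finset.sum_pow, sym_univ, Multiset.prod_map_mul, mul_assoc]

/-- A monomial of degree `j + 1 ≤ K` in variables indexed by `ι`, as the multiset of its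
variables. -/
abbrev NonconstMonomial (ι : Type*) (K : ℕ) : Type _ := Σ j : Fin K, Sym ι (j + 1)

lemma eval_sum_mul_eq_sum_nonconstMonomial {R ι : Type*} [CommSemiring R] [Fintype ι]
    [DecidableEq ι] {K : ℕ} {p : R[X]} (hp : p.natDegree ≤ K) (x y : ι → R) :
    p.eval (∑ s, x s * y s) =
      ∑ q : NonconstMonomial ι K, p.coeff (q.1 + 1) * q.2.val.countPerms *
        (q.2.val.map x).prod * (q.2.val.map y).prod + p.coeff 0 := by
  rw [eval_eq_sum_range' (Nat.lt_succ_of_le hp), sum_range_succ', Fintype.sum_sigma,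
    ← Fin.sum_univ_eq_sum_range]
  simp only [sum_mul_pow_eq_sum_sym, mul_sum, mul_assoc, pow_zero, mul_one]

lemma sum_eval_sum_mul_eq {R ι κ : Type*} [CommSemiring R] [Fintype ι] [DecidableEq ι]
    [Fintype κ] {K : ℕ} {p : R[X]} (hp : p.natDegree ≤ K) (x : ι → R) (y : κ → ι → R) :
    ∑ i, p.eval (∑ s, x s * y i s) =
      ∑ q : NonconstMonomial ι K, p.coeff (q.1 + 1) * q.2.val.countPerms *
        (q.2.val.map x).prod * ∑ i, (q.2.val.map (y i)).prod + Fintype.card κ * p.coeff 0 := by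
  simp only [eval_sum_mul_eq_sum_nonconstMonomial hp, sum_add_distrib, sum_const, card_univ,
    nsmul_eq_mul, mul_sum]
  rw [sum_comm]

lemma sum_choose_add_le (S K : ℕ) :
    ∑ j ∈ range K, (S + j).choose (j + 1) + (K + 1) ≤ (K + S + 1).choose (S + 1) := by
  rw [show K + S + 1 = S + 1 + K by ring, Nat.choose_symm_add]
  induction K with
  | zero => simp
  | succ K ih =>
    have hpos : 0 < (S + K).choose K := Nat.choose_pos (by omega)
    have pascal₁ := Nat.choose_succ_succ' (S + 1 + K) K
    have pascal₂ := Nat.choose_succ_succ' (S + K) K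
    rw [show S + 1 + K + 1 = S + 1 + (K + 1) by ring] at pascal₁
    rw [show S + K + 1 = S + 1 + K by ring] at pascal₂
    rw [sum_range_succ]
    omega

lemma card_nonconstMonomial_le (S K : ℕ) :
    Fintype.card (NonconstMonomial (Fin S) K) ≤ (K + S + 1).choose (S + 1) - (K + 1) := by
  have hcard :
      Fintype.card (NonconstMonomial (Fin S) K) = ∑ j ∈ range K, (S + j).choose (j + 1) := by
    rw [Fintype.card_sigma, ← Fin.sum_univ_eq_sum_range (fun j => (S + j).choose (j + 1))]
    simp [Sym.card_sym_eq_choose]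
  have := sum_choose_add_le S K
  omega

theorem mc_repar_taylor_extra_indeterminate_general {Θ Ξ : Type*} (S K : ℕ)
    (η : Fin S → Θ → ℝ) (T : Fin S → Ξ → ℝ) (a : ℝ) (c : Fin (K + 1) → ℝ) :
    ∀ M : ℕ, ∃ (n : Θ → Fin ((K + S + 1).choose (S + 1) - (K + 1)) → ℝ)
      (t : (Fin M → Ξ) → Fin ((K + S + 1).choose (S + 1) - (K + 1)) → ℝ) (r : ℝ),
      ∀ (θ : Θ) (ξ : Fin M → Ξ),
        ∑ i : Fin M, ∑ k : Fin (K + 1),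
            c k * (∑ s : Fin S, η s θ * T s (ξ i) - a) ^ (k : ℕ) =
          (∑ j, n θ j * t ξ j) + r := by
  intro M
  set p : ℝ[X] := ∑ k : Fin (K + 1), C (c k) * (X - C a) ^ (k : ℕ)
  have hp : p.natDegree ≤ K := by
    refine natDegree_sum_le_of_forall_le _ _ fun k _ => ?_
    refine (natDegree_C_mul_le _ _).trans ?_
    simp only [natDegree_pow, natDegree_sub_C, natDegree_X, mul_one]
    exact Nat.lt_succ_iff.mp k.isLt
  obtain ⟨n, t, hnt⟩ := exists_fin_factorization_of_card_le (card_nonconstMonomial_le S K)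
    (fun θ (q : NonconstMonomial (Fin S) K) =>
      p.coeff (q.1 + 1) * q.2.val.countPerms * (q.2.val.map fun s => η s θ).prod)
    (fun (ξ : Fin M → Ξ) q => ∑ i, (q.2.val.map fun s => T s (ξ i)).prod)
  refine ⟨n, t, M * p.coeff 0, fun θ ξ => ?_⟩
  have hexpand := sum_eval_sum_mul_eq hp (fun s => η s θ) (fun i s => T s (ξ i))
  simp only [p, eval_finsetSum, eval_mul, eval_C, eval_pow, eval_sub, eval_X,
    Fintype.card_fin] at hexpand
  rw [hexpand, hnt]

/-- Theorem 4, first route: the Monte Carlo sum of the degree-`K` Taylor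
approximation `∑_{k=0}^K c_k (w - a)^k` of `g`, for weights
`W(θ,ξ) = ∑ s, η s θ * T s ξ` with `S ≥ 2`, admits for every `M` a
factorization of size `D = C(K + S + 1, S + 1) - (K + 1)`, independent of `M`,
up to a constant (θ- and ξ-independent) remainder. -/
theorem mc_repar_taylor_extra_indeterminate {Θ Ξ : Type*} (S K : ℕ) (hS : 2 ≤ S)
    (η : Fin S → Θ → ℝ) (T : Fin S → Ξ → ℝ) (a : ℝ) (c : Fin (K + 1) → ℝ) :
    ∀ M : ℕ, ∃ (n : Θ → Fin ((K + S + 1).choose (S + 1) - (K + 1)) → ℝ)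
      (t : (Fin M → Ξ) → Fin ((K + S + 1).choose (S + 1) - (K + 1)) → ℝ) (r : ℝ),
      ∀ (θ : Θ) (ξ : Fin M → Ξ),
        ∑ i : Fin M, ∑ k : Fin (K + 1),
            c k * (∑ s : Fin S, η s θ * T s (ξ i) - a) ^ (k : ℕ) =
          (∑ j, n θ j * t ξ j) + r :=
  mc_repar_taylor_extra_indeterminate_general S K η T a c
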